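/- Assume d(L) ≥ 2g-2, D nonempty, and L ≠ ω_Y. Then dim A'_p = dim U_par(n,d) + (n(n+1)/2)(d(L) - (2g-2)) - 1, where dim A'_p = Σ_{j=1}^n (j·d(L) + Σ_{x∈D}(j - γ_j(x)) + 1 - g) and dim U_par(n,d) = n²(g-1) + 1 + Σ_{x∈D} dim(GL(n)/P_x). If L = ω_Y then dim A'_p = dim U_par(n,d). -/
import Mathlib


/-- With `d(L) ≥ 2g-2` and `D` nonempty:
if `L ≠ ω_Y`, then `dim A'_p = Σ_{j=1}^n (j·d(L) + Σ_{x∈D}(j - γ_j(x)) + 1 - g)`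
equals `dim U_par(n,d) + (n(n+1)/2)(d(L) - (2g-2)) - 1`, where
`dim U_par(n,d) = n²(g-1) + 1 + Σ_{x∈D} dim(GL(n)/P_x)` and
`Σ_{j=1}^n (j - γ_j(x)) = dim GL(n)/P_x`.
If `L = ω_Y` (so `d(L) = 2g-2`, `γ_1(x) = 1`, and the `j = 1` summand is
`h⁰(ω_Y) = g`), then `dim A'_p = dim U_par(n,d)`. -/
theorem stmt13 (n : ℕ) (hn : 1 ≤ n) (g dL : ℤ) (hdL : 2 * g - 2 ≤ dL)
    (D : Type*) [Fintype D] [Nonempty D]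
    (γ : ℕ → D → ℤ) (dimGP : D → ℤ)
    (hγ : ∀ x, (∑ j ∈ Finset.Icc 1 n, ((j : ℤ) - γ j x)) = dimGP x)
    (dimU : ℤ)
    (hU : dimU = (n : ℤ) ^ 2 * (g - 1) + 1 + ∑ x, dimGP x) :
    ((∑ j ∈ Finset.Icc 1 n,
        ((j : ℚ) * dL + (∑ x, ((j : ℚ) - (γ j x : ℚ))) + 1 - g))
      = (dimU : ℚ) + ((n : ℚ) * (n + 1) / 2) * ((dL : ℚ) - (2 * g - 2)) - 1) ∧
    (dL = 2 * g - 2 → (∀ x, γ 1 x = 1) →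
      ((g : ℚ) + ∑ j ∈ Finset.Icc 2 n,
          ((j : ℚ) * dL + (∑ x, ((j : ℚ) - (γ j x : ℚ))) + 1 - g))
        = (dimU : ℚ)) := by
  have hγQ : ∀ x, (∑ j ∈ Finset.Icc 1 n, ((j : ℚ) - (γ j x : ℚ))) = (dimGP x : ℚ) := by
    intro x; exact_mod_cast hγ x
  have hcard : (Finset.Icc 1 n).card = n := by simp
  have hsumj : ∀ m : ℕ, (∑ j ∈ Finset.Icc 1 m, (j : ℚ)) = (m : ℚ) * (m + 1) / 2 := by
    intro m
    induction m with
    | zero => simp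
    | succ k ih =>
      rw [Finset.sum_Icc_succ_top (Nat.le_add_left 1 k)]
      push_cast
      rw [ih]
      ring
  have hT : (∑ j ∈ Finset.Icc 1 n,
        ((j : ℚ) * dL + (∑ x, ((j : ℚ) - (γ j x : ℚ))) + 1 - g))
      = ((n : ℚ) * (n + 1) / 2) * dL + (∑ x, (dimGP x : ℚ)) + (n : ℚ) * (1 - g) := by
    have : (∑ j ∈ Finset.Icc 1 n,
        ((j : ℚ) * dL + (∑ x, ((j : ℚ) - (γ j x : ℚ))) + 1 - g))
      = (∑ j ∈ Finset.Icc 1 n, (j : ℚ) * dL)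
        + (∑ j ∈ Finset.Icc 1 n, ∑ x, ((j : ℚ) - (γ j x : ℚ)))
        + (∑ j ∈ Finset.Icc 1 n, ((1 : ℚ) - g)) := by
      rw [← Finset.sum_add_distrib, ← Finset.sum_add_distrib]
      apply Finset.sum_congr rfl
      intro j _; ring
    rw [this, Finset.sum_comm]
    simp only [hγQ, ← Finset.sum_mul, hsumj n, Finset.sum_const, hcard, nsmul_eq_mul]
  have hSQ : ((∑ x, dimGP x : ℤ) : ℚ) = ∑ x, (dimGP x : ℚ) := by push_cast; rfl
  have hUQ : (dimU : ℚ) = (n : ℚ) ^ 2 * (g - 1) + 1 + ∑ x, (dimGP x : ℚ) := by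
    rw [hU]; push_cast; ring
  have part1 : (∑ j ∈ Finset.Icc 1 n,
        ((j : ℚ) * dL + (∑ x, ((j : ℚ) - (γ j x : ℚ))) + 1 - g))
      = (dimU : ℚ) + ((n : ℚ) * (n + 1) / 2) * ((dL : ℚ) - (2 * g - 2)) - 1 := by
    rw [hT, hUQ]; ring
  refine ⟨part1, fun hdl hγ1 => ?_⟩
  have hsplit : Finset.Icc 1 n = insert 1 (Finset.Icc 2 n) := by
    ext j; simp only [Finset.mem_Icc, Finset.mem_insert]; omega
  have h1 : (1 : ℕ) ∉ Finset.Icc 2 n := by simp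
  have hins : (∑ j ∈ Finset.Icc 1 n,
        ((j : ℚ) * dL + (∑ x, ((j : ℚ) - (γ j x : ℚ))) + 1 - g))
      = ((1 : ℚ) * dL + (∑ x, ((1 : ℚ) - (γ 1 x : ℚ))) + 1 - g)
        + ∑ j ∈ Finset.Icc 2 n,
          ((j : ℚ) * dL + (∑ x, ((j : ℚ) - (γ j x : ℚ))) + 1 - g) := by
    rw [hsplit, Finset.sum_insert h1]; norm_num
  have hterm1 : ((1 : ℚ) * dL + (∑ x, ((1 : ℚ) - (γ 1 x : ℚ))) + 1 - g) = (g : ℚ) - 1 := by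
    have : (∑ x, ((1 : ℚ) - (γ 1 x : ℚ))) = 0 := by
      apply Finset.sum_eq_zero; intro x _; rw [hγ1 x]; norm_num
    rw [this, hdl]; push_cast; ring
  have hdlQ : (dL : ℚ) = 2 * (g : ℚ) - 2 := by rw [hdl]; push_cast; ring
  rw [hins, hterm1] at part1
  rw [hdlQ, sub_self, mul_zero] at part1
  rw [hdlQ]
  linarith [part1]
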